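/- Under the conditions of the multivariate power theorem (d ∈ ℕ, τ ∈ ℝ, σ, γ, λ > 0, θ > 1, P ∈ P_Mon,d(σ) ∩ P_Reg,d(τ, θ, γ, λ) with covariate marginal μ and regression function η, n ∈ ℕ, α ∈ (0,1), D ∼ P^n, and with C ≥ 1 the constant from that theorem depending only on (d, θ)), if m₀ := n ∧ ⌈n λ²/σ²⌉, then E_P μ(X_τ(η) \ Â^{ISS}_{σ,τ,α,m₀}(D)) ≤ 1 ∧ 4C { (σ²/(n λ²) · log_+(n λ² log_+ n / (σ² α)))^{1/(2γ+d)} + (log_+ n / n)^{1/d} }. -/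

import Mathlib

open MeasureTheory ProbabilityTheory Real Set
open scoped ENNReal Classical

noncomputable section

/-- `log_+ x := log (x ∨ e)`. -/
def logp (x : ℝ) : ℝ := Real.log (max x (Real.exp 1))

/-- The σ-algebra generated by the covariate `X = Prod.fst`. -/
def mX (d : ℕ) : MeasurableSpace ((Fin d → ℝ) × ℝ) :=
  MeasurableSpace.comap Prod.fst inferInstance

/-- `η` is (a version of) the regression function `x ↦ E[Y | X = x]` of `P`. -/
def IsRegFn (d : ℕ) (P : Measure ((Fin d → ℝ) × ℝ)) (η : (Fin d → ℝ) → ℝ) : Prop :=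
  Measurable η ∧ (fun p => η p.1) =ᵐ[P] P[fun p => p.2 | mX d]

/-- Conditionally on `X`, `Y - η X` is sub-Gaussian with variance parameter `σ²`. -/
def CondSubG (d : ℕ) (σ : ℝ) (P : Measure ((Fin d → ℝ) × ℝ)) (η : (Fin d → ℝ) → ℝ) : Prop :=
  ∀ t : ℝ, Integrable (fun p => Real.exp (t * (p.2 - η p.1))) P ∧
    (P[fun p => Real.exp (t * (p.2 - η p.1)) | mX d])
      ≤ᵐ[P] fun _ => Real.exp (σ ^ 2 * t ^ 2 / 2)

/-- The class `P_{Mon,d}(σ)`, as a predicate on the pair `(P, η)`. -/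
def PMon (d : ℕ) (σ : ℝ) (P : Measure ((Fin d → ℝ) × ℝ)) (η : (Fin d → ℝ) → ℝ) : Prop :=
  IsProbabilityMeasure P ∧ IsRegFn d P η ∧ Monotone η ∧ CondSubG d σ P η

/-- The margin class `P_{Mar,d}(τ, β, ν)`, as a predicate on the pair `(P, η)`. -/
def PMar (d : ℕ) (τ β ν : ℝ) (P : Measure ((Fin d → ℝ) × ℝ)) (η : (Fin d → ℝ) → ℝ) : Prop :=
  IsProbabilityMeasure P ∧ IsRegFn d P η ∧
    ∀ ξ : ℝ, ξ ∈ Set.Ioc (0 : ℝ) 1 →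
      (P.map Prod.fst) (η ⁻¹' Set.Icc τ (τ + ν * ξ ^ β)) ≤ ENNReal.ofReal ξ

/-- Support of a Borel measure: the points all of whose open neighbourhoods have
positive measure. -/
def measSupport {α : Type*} [TopologicalSpace α] [MeasurableSpace α] (μ : Measure α) : Set α :=
  {x | ∀ U : Set α, IsOpen U → x ∈ U → 0 < μ U}

/-- The regularity class `P_{Reg,d}(τ, θ, γ, λ)`, as a predicate on the pair `(P, η)`. -/
def PReg (d : ℕ) (τ θ γ lam : ℝ) (P : Measure ((Fin d → ℝ) × ℝ)) (η : (Fin d → ℝ) → ℝ) : Prop :=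
  IsProbabilityMeasure P ∧ IsRegFn d P η ∧
    ∀ x ∈ {x | τ ≤ η x} ∩ measSupport (P.map Prod.fst), ∀ r : ℝ, r ∈ Set.Ioc (0:ℝ) 1 →
      (ENNReal.ofReal (θ⁻¹ * r ^ d) ≤ (P.map Prod.fst) (Metric.closedBall x r) ∧
        (P.map Prod.fst) (Metric.closedBall x r) ≤ ENNReal.ofReal (θ * (2 * r) ^ d)) ∧
      (Metric.closedBall x r ∩ {z | τ + lam * r ^ γ ≤ η z}).Nonempty

/-- Indices `i` with `X i ≼ x`, ordered by increasing sup-norm distance to `x`,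
ties broken by the original index ordering. -/
def nnOrder {d n : ℕ} (X : Fin n → (Fin d → ℝ)) (x : Fin d → ℝ) : List (Fin n) :=
  List.insertionSort
    (fun i j => ‖X i - x‖ < ‖X j - x‖ ∨ (‖X i - x‖ = ‖X j - x‖ ∧ i ≤ j))
    ((List.finRange n).filter (fun i => decide (X i ≤ x)))

/-- The martingale sums `S_k = ∑_{j=1}^k (Y_{(j)}(x) - τ)/σ`. -/
def Smart {d n : ℕ} (σ τ : ℝ) (D : Fin n → (Fin d → ℝ) × ℝ) (x : Fin d → ℝ) (k : ℕ) : ℝ :=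
  ((((nnOrder (fun i => (D i).1) x).take k).map (fun i => ((D i).2 - τ) / σ)).sum)

/-- The anytime-valid martingale p-value `p̂_{σ,τ}(x, D)`. -/
def phat {d n : ℕ} (σ τ : ℝ) (D : Fin n → (Fin d → ℝ) × ℝ) (x : Fin d → ℝ) : ℝ :=
  ((List.range (nnOrder (fun i => (D i).1) x).length).map (fun k =>
      5.2 * Real.exp (-(max (Smart σ τ D x (k + 1)) 0) ^ 2 / (2.0808 * (k + 1))
        + Real.log (Real.log (2 * (k + 1))) / 0.72))).foldr min 1

/-- One iteration of the DAG testing procedure `R^ISS`. Edges point from parents to children: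
`E a b` means `a` is a parent of `b`; `F` is the weight-one (polyforest) subrelation. -/
def RISSstep {I : Type*} [Fintype I] (E F : I → I → Prop) (α : ℝ) (p : I → ℝ)
    (R : Finset I) : Finset I :=
  let SL : Finset I := Finset.univ.filter (fun i => (∀ j, ¬ F i j) ∧ i ∉ R)
  let SC : Finset I := Finset.univ.filter (fun i => i ∉ R ∧ ∀ j, F j i → j ∈ R)
  let budget : I → ℝ := fun i =>
    if i ∈ SC then
      ((SL.filter (fun j => j = i ∨ Relation.TransGen F i j)).card : ℝ) * α / (SL.card : ℝ)
    else 0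
  let Il : Finset I := Finset.univ.filter (fun i => p i ≤ budget i)
  if Il = ∅ then R
  else R ∪ Il ∪ Finset.univ.filter (fun i => ∃ j ∈ Il, Relation.TransGen E i j)

/-- The DAG testing procedure `R^ISS_α` applied to a polyforest-weighted DAG `(I, E, w)`
(represented by the edge relation `E` and the weight-one subrelation `F`) and p-values `p`. -/
def RISS {I : Type*} [Fintype I] (E F : I → I → Prop) (α : ℝ) (p : I → ℝ) : Finset I :=
  (RISSstep E F α p)^[Fintype.card I] ∅

/-- Edge relation of the DAG induced by the covariate points `z`. -/
def indE {d m : ℕ} (z : Fin m → (Fin d → ℝ)) (i0 i1 : Fin m) : Prop :=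
  i0 ≠ i1 ∧ z i1 ≤ z i0 ∧ ∀ i2, z i1 ≤ z i2 → z i2 ≤ z i0 →
    (z i2 = z i0 ∧ i0 ≤ i2) ∨ (z i2 = z i1 ∧ i2 ≤ i1)

/-- Edge relation of the induced polyforest: among the induced-DAG parents of `i1`, keep the one
of minimal sup-norm distance to `z i1`, ties broken by smallest index. -/
def indF {d m : ℕ} (z : Fin m → (Fin d → ℝ)) (i0 i1 : Fin m) : Prop :=
  indE z i0 i1 ∧ ∀ i, indE z i i1 →
    (‖z i0 - z i1‖ < ‖z i - z i1‖ ∨ (‖z i0 - z i1‖ = ‖z i - z i1‖ ∧ i0 ≤ i))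

/-- The selection set `Â^{ISS}_{σ,τ,α,m}(D)`: the upper hull of the covariate points (among the
first `m` data points) whose hypotheses are rejected by `R^ISS` applied to the induced
polyforest-weighted DAG of `(X_1, …, X_m)` and the martingale p-values `p̂_{σ,τ}(X_i, D)`. -/
def AISS {d n : ℕ} (σ τ α : ℝ) (m : ℕ) (hm : m ≤ n)
    (D : Fin n → (Fin d → ℝ) × ℝ) : Set (Fin d → ℝ) :=
  let z : Fin m → (Fin d → ℝ) := fun i => (D (Fin.castLE hm i)).1
  {x | ∃ i ∈ RISS (indE z) (indF z) α (fun i => phat σ τ D (z i)), z i ≤ x}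

/-- `A` is a valid data-dependent selection set at level `α` for the class `PC`:
it is jointly measurable and satisfies the Type I error guarantee over `PC`. -/
def SelValid (d n : ℕ) (τ α : ℝ)
    (PC : Measure ((Fin d → ℝ) × ℝ) → ((Fin d → ℝ) → ℝ) → Prop)
    (A : (Fin n → (Fin d → ℝ) × ℝ) → Set (Fin d → ℝ)) : Prop :=
  MeasurableSet {q : (Fin n → (Fin d → ℝ) × ℝ) × (Fin d → ℝ) | q.2 ∈ A q.1} ∧
  ∀ P η, PC P η →
    ENNReal.ofReal (1 - α) ≤ (Measure.pi fun _ : Fin n => P) {ω | A ω ⊆ {x | τ ≤ η x}}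

end

/-! Apply the power theorem with `m₀ = n ∧ ⌈ρ⌉`, `ρ = nλ²/σ²`. Only the case where the target
bound is below `1` matters, and there `b := ρ⁻¹ log_+(ρ log_+ n / α) < 1/2`; hence `ρ ≥ 2`,
so `m₀ ≤ 2ρ`, and `m₀ ≥ ρ` unless `m₀ = n`. As `log_+ (2x) ≤ 2 log_+ x` and `(2b)^e ≤ 2 b^e`
for `e ≤ 1`, the first rate at `m₀` is at most twice the first target rate, and so is the
second one when `m₀ = ⌈ρ⌉`, since then its base is at most `2b ≤ 1` and
`1/d ≥ 1/(2γ + d)`. -/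

lemma one_le_logp (x : ℝ) : 1 ≤ logp x := by
  simpa [logp] using Real.log_le_log (Real.exp_pos 1) (le_max_right x (Real.exp 1))

lemma logp_pos (x : ℝ) : 0 < logp x := one_pos.trans_le (one_le_logp x)

lemma logp_mono : Monotone logp := fun _ _ h =>
  Real.log_le_log ((Real.exp_pos 1).trans_le (le_max_right _ _)) (max_le_max h le_rfl)

lemma logp_two_mul {x : ℝ} (hx : 0 < x) : logp (2 * x) ≤ 2 * logp x := by
  rcases le_or_gt (2 * x) (Real.exp 1) with h | h
  · rw [logp, max_eq_right h, Real.log_exp]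
    linarith [one_le_logp x]
  · rw [logp, max_eq_left h.le, Real.log_mul two_ne_zero hx.ne']
    have hlog_le : Real.log x ≤ logp x := Real.log_le_log hx (le_max_left _ _)
    linarith [Real.log_two_lt_d9, one_le_logp x]

lemma two_mul_rpow_le {b e : ℝ} (hb : 0 ≤ b) (he₁ : e ≤ 1) :
    (2 * b) ^ e ≤ 2 * b ^ e := by
  rw [Real.mul_rpow zero_le_two hb]
  gcongr
  exact Real.rpow_le_self_of_one_le one_le_two he₁

lemma lt_half_of_rpow_lt_half {b e : ℝ} (he₀ : 0 ≤ e) (he₁ : e ≤ 1) (h : b ^ e < 1 / 2) :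
    b < 1 / 2 := by
  by_contra! hb
  have : (1 / 2 : ℝ) ≤ b ^ e := calc
    (1 / 2 : ℝ) ≤ (1 / 2) ^ e := Real.self_le_rpow_of_le_one (by norm_num) (by norm_num) he₁
    _ ≤ b ^ e := Real.rpow_le_rpow (by norm_num) hb he₀
  linarith

lemma min_one_le_min_one {x y : ℝ} (h : y < 1 → x ≤ y) : min 1 x ≤ min 1 y := by
  rcases le_or_gt 1 y with hy | hy
  · exact (min_le_left 1 x).trans (le_min le_rfl hy)
  · exact min_le_min_left 1 (h hy)

section

variable {ρ α : ℝ} {n : ℕ}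

lemma min_ceil_le_two_mul (hρ : 1 ≤ ρ) : ((min n ⌈ρ⌉₊ : ℕ) : ℝ) ≤ 2 * ρ := calc
  ((min n ⌈ρ⌉₊ : ℕ) : ℝ) ≤ ⌈ρ⌉₊ := by exact_mod_cast min_le_right n _
  _ ≤ 2 * ρ := by linarith [Nat.ceil_lt_add_one (zero_le_one.trans hρ)]

lemma logp_min_ceil_mul_div_le (hρ : 1 ≤ ρ) (hα : 0 < α) :
    logp ((min n ⌈ρ⌉₊ : ℕ) * logp n / α) ≤ 2 * logp (ρ * logp n / α) := calc
  _ ≤ logp (2 * (ρ * logp n / α)) := logp_mono <| by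
      rw [← mul_div_assoc, ← mul_assoc]
      gcongr
      · exact (logp_pos _).le
      · exact min_ceil_le_two_mul hρ
  _ ≤ 2 * logp (ρ * logp n / α) :=
      logp_two_mul (div_pos (mul_pos (by linarith) (logp_pos _)) hα)

lemma logp_ceil_div_ceil_le (hρ : 1 ≤ ρ) (hα₀ : 0 < α) (hα₁ : α ≤ 1) :
    logp ⌈ρ⌉₊ / ⌈ρ⌉₊ ≤ 2 * logp (ρ * logp n / α) / ρ := by
  have hρ₀ : 0 < ρ := by linarith
  have hlog : logp ⌈ρ⌉₊ ≤ 2 * logp (ρ * logp n / α) := calc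
    logp ⌈ρ⌉₊ ≤ logp (2 * ρ) := logp_mono (by linarith [Nat.ceil_lt_add_one hρ₀.le])
    _ ≤ 2 * logp ρ := logp_two_mul hρ₀
    _ ≤ 2 * logp (ρ * logp n / α) := by
      refine mul_le_mul_of_nonneg_left (logp_mono ?_) zero_le_two
      rw [le_div_iff₀ hα₀]
      nlinarith [one_le_logp n]
  exact div_le_div₀ (by linarith [logp_pos ⌈ρ⌉₊]) hlog hρ₀ (Nat.le_ceil ρ)

lemma rate_min_ceil_le {e₁ e₂ : ℝ} (hρ : 0 < ρ) (hα : α ∈ Ioo (0 : ℝ) 1)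
    (he₁_nonneg : 0 ≤ e₁) (he₁₂ : e₁ ≤ e₂) (he₁_le_one : e₁ ≤ 1)
    (hsmall : (ρ⁻¹ * logp (ρ * logp n / α)) ^ e₁ < 1 / 2) :
    (ρ⁻¹ * logp ((min n ⌈ρ⌉₊ : ℕ) * logp n / α)) ^ e₁
        + (logp (min n ⌈ρ⌉₊ : ℕ) / (min n ⌈ρ⌉₊ : ℕ)) ^ e₂
      ≤ 4 * ((ρ⁻¹ * logp (ρ * logp n / α)) ^ e₁ + (logp n / n) ^ e₂) := by
  set L := logp (ρ * logp n / α) with hL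
  set B := ρ⁻¹ * L with hB
  have hB₀ : 0 < B := mul_pos (inv_pos.2 hρ) (logp_pos _)
  have h2B : 2 * B ≤ 1 := by
    linarith [lt_half_of_rpow_lt_half he₁_nonneg he₁_le_one hsmall]
  have hρ₁ : 1 ≤ ρ := calc
    1 ≤ 2 * L := by linarith [one_le_logp (ρ * logp n / α)]
    _ = ρ * (2 * B) := by rw [hB]; field_simp
    _ ≤ ρ := mul_le_of_le_one_right hρ.le h2B
  have hrate_n : 0 ≤ (logp n / n) ^ e₂ :=
    Real.rpow_nonneg (div_nonneg (logp_pos _).le n.cast_nonneg) _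
  have hfirst : (ρ⁻¹ * logp ((min n ⌈ρ⌉₊ : ℕ) * logp n / α)) ^ e₁ ≤ 2 * B ^ e₁ := calc
    _ ≤ (2 * B) ^ e₁ := by
        refine Real.rpow_le_rpow (mul_nonneg (inv_nonneg.2 hρ.le) (logp_pos _).le) ?_
          he₁_nonneg
        rw [hB, mul_left_comm]
        exact mul_le_mul_of_nonneg_left (logp_min_ceil_mul_div_le hρ₁ hα.1) (inv_nonneg.2 hρ.le)
    _ ≤ 2 * B ^ e₁ := two_mul_rpow_le hB₀.le he₁_le_one
  have hsecond : (logp (min n ⌈ρ⌉₊ : ℕ) / (min n ⌈ρ⌉₊ : ℕ)) ^ e₂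
      ≤ 2 * B ^ e₁ + (logp n / n) ^ e₂ := by
    rcases min_choice n ⌈ρ⌉₊ with h | h <;> rw [h]
    · linarith [Real.rpow_nonneg hB₀.le e₁]
    · calc (logp ⌈ρ⌉₊ / ⌈ρ⌉₊) ^ e₂ ≤ (2 * B) ^ e₂ := by
            refine Real.rpow_le_rpow (div_nonneg (logp_pos _).le (Nat.cast_nonneg _)) ?_
              (he₁_nonneg.trans he₁₂)
            convert logp_ceil_div_ceil_le (n := n) hρ₁ hα.1 hα.2.le using 1
            rw [hB, hL]; field_simp
        _ ≤ (2 * B) ^ e₁ := Real.rpow_le_rpow_of_exponent_ge (by positivity) h2B he₁₂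
        _ ≤ 2 * B ^ e₁ := two_mul_rpow_le hB₀.le he₁_le_one
        _ ≤ 2 * B ^ e₁ + (logp n / n) ^ e₂ := le_add_of_nonneg_right hrate_n
  linarith

end

theorem statement7 (d : ℕ) (hd : 0 < d) (θ : ℝ) (C : ℝ) (hC1 : 1 ≤ C)
    (hC : ∀ (τ σ γ lam : ℝ), 0 < σ → 0 < γ → 0 < lam →
      ∀ (P : Measure ((Fin d → ℝ) × ℝ)) (η : (Fin d → ℝ) → ℝ),
        PMon d σ P η → PReg d τ θ γ lam P η →
      ∀ (n : ℕ), 0 < n → ∀ (α : ℝ), α ∈ Set.Ioo (0 : ℝ) 1 →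
      ∀ (m : ℕ) (_ : 1 ≤ m) (hm : m ≤ n),
        ∫⁻ ω, (P.map Prod.fst) ({x | τ ≤ η x} \ AISS σ τ α m hm ω)
            ∂(Measure.pi fun _ : Fin n => P)
          ≤ ENNReal.ofReal (min 1 (C *
              ((σ ^ 2 / ((n : ℝ) * lam ^ 2) * logp ((m : ℝ) * logp (n : ℝ) / α))
                  ^ (1 / (2 * γ + (d : ℝ)))
                + (logp (m : ℝ) / (m : ℝ)) ^ (1 / (d : ℝ)))))) :
    ∀ (τ σ γ lam : ℝ), 0 < σ → 0 < γ → 0 < lam →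
    ∀ (P : Measure ((Fin d → ℝ) × ℝ)) (η : (Fin d → ℝ) → ℝ),
      PMon d σ P η → PReg d τ θ γ lam P η →
    ∀ (n : ℕ), 0 < n → ∀ (α : ℝ), α ∈ Set.Ioo (0 : ℝ) 1 →
      ∫⁻ ω, (P.map Prod.fst) ({x | τ ≤ η x} \
            AISS σ τ α (min n ⌈(n : ℝ) * lam ^ 2 / σ ^ 2⌉₊) (min_le_left _ _) ω)
          ∂(Measure.pi fun _ : Fin n => P)
        ≤ ENNReal.ofReal (min 1 (4 * C *
            ((σ ^ 2 / ((n : ℝ) * lam ^ 2)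
                * logp ((n : ℝ) * lam ^ 2 * logp (n : ℝ) / (σ ^ 2 * α)))
                ^ (1 / (2 * γ + (d : ℝ)))
              + (logp (n : ℝ) / (n : ℝ)) ^ (1 / (d : ℝ))))) := by
  intro τ σ γ lam hσ hγ hlam P η hMon hReg n hn α hα
  set ρ : ℝ := (n : ℝ) * lam ^ 2 / σ ^ 2
  have hρ : 0 < ρ := by positivity
  have hscale : σ ^ 2 / ((n : ℝ) * lam ^ 2) = ρ⁻¹ := (inv_div _ _).symm
  have harg : (n : ℝ) * lam ^ 2 * logp n / (σ ^ 2 * α) = ρ * logp n / α := by ring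
  have hm : 1 ≤ min n ⌈ρ⌉₊ := le_min hn (Nat.one_le_ceil_iff.mpr hρ)
  have hd' : (1 : ℝ) ≤ d := by exact_mod_cast hd
  refine (hC τ σ γ lam hσ hγ hlam P η hMon hReg n hn α hα _ hm (min_le_left _ _)).trans
    (ENNReal.ofReal_le_ofReal (min_one_le_min_one fun hsmall => ?_))
  rw [hscale, harg] at hsmall ⊢
  set T₁ := (ρ⁻¹ * logp (ρ * logp n / α)) ^ (1 / (2 * γ + (d : ℝ)))
  set T₂ := (logp n / n) ^ (1 / (d : ℝ))
  have hT₁ : 0 ≤ T₁ := Real.rpow_nonneg (mul_nonneg (inv_nonneg.2 hρ.le) (logp_pos _).le) _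
  have hT₂ : 0 ≤ T₂ := Real.rpow_nonneg (div_nonneg (logp_pos _).le n.cast_nonneg) _
  have hT₁_small : T₁ < 1 / 2 := by nlinarith
  calc _ ≤ C * (4 * (T₁ + T₂)) := by
        exact mul_le_mul_of_nonneg_left (rate_min_ceil_le hρ hα (by positivity)
          (one_div_le_one_div_of_le (by positivity) (by linarith))
          (by rw [div_le_one] <;> linarith) hT₁_small) (by linarith)
    _ = 4 * C * (T₁ + T₂) := by ring
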